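/- A sequence y ∈ Y cannot simultaneously contain an elementary block belonging to {ABA, DCD} and an elementary block belonging to {BAB, CDC}. -/

import Mathlib

open MeasureTheory Filter Topology
open scoped ENNReal

attribute [local instance] Classical.propDecidable

noncomputable section

/-- The shift map on bi-infinite sequences: `(S x) n = x (n+1)`. -/
def shift {α : Type*} (x : ℤ → α) : ℤ → α := fun n => x (n + 1)

/-- Shift by an arbitrary integer amount `m`. -/
def shiftZ {α : Type*} (m : ℤ) (x : ℤ → α) : ℤ → α := fun n => x (n + m)

/-- A run structure on a bi-infinite sequence `x`: `t k` is the starting index of the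
`k`-th maximal mono-symbol block of `x`, indexed so that block `0` contains position `0`. -/
structure RunStructure (x : ℤ → ℕ) where
  t : ℤ → ℤ
  mono : StrictMono t
  start_nonpos : t 0 ≤ 0
  start_pos : 0 < t 1
  const : ∀ k i : ℤ, t k ≤ i → i < t (k + 1) → x i = x (t k)
  alt : ∀ k : ℤ, x (t (k + 1)) ≠ x (t k)

/-- `d` is the run-length derivative of `x`: `d k` is the length of the `k`-th run. -/
def IsDelta (x d : ℤ → ℕ) : Prop :=
  ∃ r : RunStructure x, ∀ k : ℤ, (d k : ℤ) = r.t (k + 1) - r.t k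

/-- The run-length derivative operator `Δ` (junk value when no derivative exists). -/
def delta (x : ℤ → ℕ) : ℤ → ℕ :=
  if h : ∃ d, IsDelta x d then h.choose else fun _ => 0

/-- A bi-infinite sequence is smooth over `{1,3}` if all its iterated derivatives exist
and take values in `{1,3}`. -/
def SmoothSeq (x : ℤ → ℕ) : Prop :=
  ∀ k : ℕ, ∀ n : ℤ, delta^[k] x n = 1 ∨ delta^[k] x n = 3

/-- The set `X` of bi-infinite smooth sequences over `{1,3}`. -/
def SmoothX : Set (ℤ → ℕ) := {x | SmoothSeq x}

/-- The recoding alphabet: `A = 1`, `B = 3`, `C = 111`, `D = 333`. -/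
inductive ABCD : Type
  | A | B | C | D
deriving DecidableEq

instance : TopologicalSpace ABCD := ⊥
instance : DiscreteTopology ABCD := ⟨rfl⟩
instance : MeasurableSpace ABCD := ⊤

open ABCD

/-- The symbol (1 or 3) of the run encoded by a letter. -/
def sval : ABCD → ℕ
  | A => 1
  | B => 3
  | C => 1
  | D => 3

/-- The length (1 or 3) of the run encoded by a letter; this is also the value of `Δx`
at the corresponding position. -/
def lval : ABCD → ℕ
  | A => 1
  | B => 1
  | C => 3
  | D => 3

/-- `y` is the recoding of `x`: the letter `y k` encodes the `k`-th run of `x`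
(its symbol and its length). -/
def IsRecoding (x : ℤ → ℕ) (y : ℤ → ABCD) : Prop :=
  ∃ r : RunStructure x, ∀ k : ℤ,
    x (r.t k) = sval (y k) ∧ r.t (k + 1) - r.t k = (lval (y k) : ℤ)

/-- The recoding map `rec` (junk value when no recoding exists). -/
def recode (x : ℤ → ℕ) : ℤ → ABCD :=
  if h : ∃ y, IsRecoding x y then h.choose else fun _ => A

/-- The set `Y = rec(X)` of recodings of smooth sequences. -/
def SmoothY : Set (ℤ → ABCD) := recode '' SmoothX

/-- The derivative operator induced on recodings: since `(Δx) i = lval (rec x i)`,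
we have `Δ(rec x) = rec (Δ x) = recode (lval ∘ rec x)`. -/
def deltaY (y : ℤ → ABCD) : ℤ → ABCD := recode fun i => (lval (y i) : ℕ)

/-- `y` is well-aligned: the elementary block of `y` containing coordinate `0` starts
at position `0` (elementary blocks of `y` are exactly the runs of `Δx`, and
`(Δx) i = lval (y i)`). -/
def WellAligned (y : ℤ → ABCD) : Prop := lval (y (-1)) ≠ lval (y 0)

/-- `B_Y^L`: the set of `y ∈ Y` such that `y, Δy, ..., Δ^{L-1} y` are all well-aligned. -/
def BY (L : ℕ) : Set (ℤ → ABCD) :=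
  {y | y ∈ SmoothY ∧ ∀ l < L, WellAligned (deltaY^[l] y)}

/-- `Σ_y^L(n) = #{k ∈ [1,n] : S^k y ∈ B_Y^L}`. -/
def SigY (L : ℕ) (y : ℤ → ABCD) (n : ℕ) : ℕ :=
  ((Finset.Icc 1 n).filter fun k => shift^[k] y ∈ BY L).card

/-- `y` contains an elementary block in `{ABA, DCD}` (for `y ∈ Y`, any such factor is
automatically an elementary block). -/
def HasType0 (y : ℤ → ABCD) : Prop :=
  ∃ i : ℤ, (y i = A ∧ y (i + 1) = B ∧ y (i + 2) = A) ∨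
           (y i = D ∧ y (i + 1) = C ∧ y (i + 2) = D)

/-- `y` contains an elementary block in `{BAB, CDC}`. -/
def HasType1 (y : ℤ → ABCD) : Prop :=
  ∃ i : ℤ, (y i = B ∧ y (i + 1) = A ∧ y (i + 2) = B) ∨
           (y i = C ∧ y (i + 1) = D ∧ y (i + 2) = C)

/-- The type of a recoded sequence: `false` = type 0, `true` = type 1. -/
def typeOf (y : ℤ → ABCD) : Bool := decide (HasType1 y)

/-- The sequence of types of the successive derivatives of a smooth sequence `x`. -/
def TypesX (x : ℤ → ℕ) : ℕ → Bool := fun n => typeOf (recode (delta^[n] x))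

/-- The sequence of types of the successive derivatives of a recoded sequence `y`. -/
def TypesY (y : ℤ → ABCD) : ℕ → Bool := fun n => typeOf (deltaY^[n] y)

/-- `X_τ`: smooth bi-infinite sequences whose type sequence is exactly `τ`. -/
def Xset (τ : ℕ → Bool) : Set (ℤ → ℕ) := {x ∈ SmoothX | TypesX x = τ}

/-- `Y_τ = rec(X_τ)`. -/
def Yset (τ : ℕ → Bool) : Set (ℤ → ABCD) := recode '' Xset τ

/-- A sequence over `{A,B,C,D}` is alternating: no two consecutive symbols in `{A,C}`
and no two consecutive symbols in `{B,D}`. -/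
def Alternating (y : ℤ → ABCD) : Prop := ∀ n : ℤ, sval (y n) ≠ sval (y (n + 1))

/-- The substitutions `φ₀` and `φ₁` on letters. -/
def phiW : Bool → ABCD → List ABCD
  | false, A => [A]
  | false, B => [D]
  | false, C => [A, B, A]
  | false, D => [D, C, D]
  | true, A => [B]
  | true, B => [C]
  | true, C => [B, A, B]
  | true, D => [C, D, C]

/-- `z` is the image of the bi-infinite sequence `y` under the substitution `φ_t`, with
the convention that the image of the letter at position `0` starts at position `0`. -/
def IsSubst (t : Bool) (y z : ℤ → ABCD) : Prop :=
  ∃ u : ℤ → ℤ, u 0 = 0 ∧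
    (∀ k : ℤ, u (k + 1) = u k + (phiW t (y k)).length) ∧
    (∀ k : ℤ, ∀ j : Fin (phiW t (y k)).length, z (u k + (j : ℕ)) = (phiW t (y k)).get j)

/-- The substitution `φ_t` on bi-infinite sequences. -/
def substF (t : Bool) (y : ℤ → ABCD) : ℤ → ABCD :=
  if h : ∃ z, IsSubst t y z then h.choose else y

/-- The composition `φ_{τ₀} ∘ φ_{τ₁} ∘ ⋯ ∘ φ_{τ_{L-1}}`. -/
def substComp (τ : ℕ → Bool) : ℕ → (ℤ → ABCD) → (ℤ → ABCD)
  | 0 => id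
  | L + 1 => substF (τ 0) ∘ substComp (fun n => τ (n + 1)) L

/-- The homographies `h₀` and `h₁`. -/
def hmap : Bool → ℝ × ℝ → ℝ × ℝ
  | false, p => ((1 - p.1) / (3 - 2 * (p.1 + p.2)), (1 / 2 - p.1) / (3 - 2 * (p.1 + p.2)))
  | true, p => ((1 / 2 - p.1) / (3 - 2 * (p.1 + p.2)), (1 - p.1) / (3 - 2 * (p.1 + p.2)))

/-- The square `K = [0,1/2] × [0,1/2]`. -/
def Ksq : Set (ℝ × ℝ) := Set.Icc (0 : ℝ) (1 / 2) ×ˢ Set.Icc (0 : ℝ) (1 / 2)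

/-- The domain `E = {(a,b) ∈ K : a + b ≤ 3/4}`. -/
def Eset : Set (ℝ × ℝ) := {p ∈ Ksq | p.1 + p.2 ≤ 3 / 4}

/-- The composition `h_{t₀} ∘ h_{t₁} ∘ ⋯ ∘ h_{t_L}`. -/
def hComp (t : ℕ → Bool) : ℕ → (ℝ × ℝ → ℝ × ℝ)
  | 0 => hmap (t 0)
  | L + 1 => hComp t L ∘ hmap (t (L + 1))

/-- The point `(a(t), b(t))`, unique point of `⋂_L (h_{t₀} ∘ ⋯ ∘ h_{t_L})(E)`. -/
def abPoint (t : ℕ → Bool) : ℝ × ℝ :=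
  if h : ∃ p : ℝ × ℝ, (⋂ L : ℕ, hComp t L '' Eset) = {p} then h.choose else 0

/-- The number of occurrences of the letter `s` among positions `1, ..., m` of `z`. -/
def letterCount (s : ABCD) (z : ℤ → ABCD) (m : ℕ) : ℕ :=
  ((Finset.Icc 1 m).filter fun k => z (k : ℤ) = s).card

/-- `w` occurs as a factor of `y` at position `i`. -/
def IsFactorAt (w : List ABCD) (y : ℤ → ABCD) (i : ℤ) : Prop :=
  ∀ j : Fin w.length, y (i + (j : ℕ)) = w.get j

/-- The cylinder set `[w]` in `{1,3}^ℤ`. -/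
def cylX (w : List ℕ) : Set (ℤ → ℕ) :=
  {x | ∀ j : Fin w.length, x ((j : ℕ) : ℤ) = w.get j}

/-- The cylinder set `[w]` in `{A,B,C,D}^ℤ`. -/
def cylY (w : List ABCD) : Set (ℤ → ABCD) :=
  {y | ∀ j : Fin w.length, y ((j : ℕ) : ℤ) = w.get j}

/-- The number of occurrences of the finite word `w` in the prefix `x₀ ⋯ x_{n-1}`. -/
def occCount (x : ℤ → ℕ) (w : List ℕ) (n : ℕ) : ℕ :=
  ((Finset.range n).filter fun i =>
    i + w.length ≤ n ∧ ∀ j : Fin w.length, x (((i + (j : ℕ) : ℕ)) : ℤ) = w.get j).card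

/-- A subshift `Z` is minimal if it contains no nonempty proper closed shift-invariant
subset. -/
def ShiftMinimal {α : Type*} [TopologicalSpace α] (Z : Set (ℤ → α)) : Prop :=
  ∀ W : Set (ℤ → α), W ⊆ Z → W.Nonempty → IsClosed W → shift '' W = W → W = Z

/-! The runs of `Δx = lval ∘ y` are the elementary blocks of `y`; they have odd length (1 or 3),
so across a block boundary the symbol `sval` flips (the runs of `x` alternate) and so does the
length `lval` (the runs of `Δx` alternate). Hence whether the first letter `a` of a block satisfies
`sval a = lval a` is the same for all blocks. It holds for the first letters `A`, `D` of
`ABA`, `DCD` and fails for the first letters `B`, `C` of `BAB`, `CDC`. -/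

namespace RunStructure

variable {x : ℤ → ℕ} (r r' : RunStructure x)

lemma exists_t_le_lt (i : ℤ) : ∃ k, r.t k ≤ i ∧ i < r.t (k + 1) := by
  -- `{k | r.t k ≤ i}` is bounded above and nonempty because `k ↦ r.t k - k` is monotone
  have hmono : Monotone fun k => r.t k - k :=
    monotone_int_of_le_succ fun k => by have := r.mono (lt_add_one k); omega
  have hbdd : ∃ b, ∀ k, r.t k ≤ i → k ≤ b := ⟨max 0 (i - r.t 0), fun k hk => by
    rcases le_or_gt k 0 with hk0 | hk0
    · exact hk0.trans (le_max_left _ _)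
    · have := hmono hk0.le; simp only at this; omega⟩
  have hne : ∃ k, r.t k ≤ i := ⟨min 0 (i - r.t 0), by
    have := hmono (min_le_left 0 (i - r.t 0)); simp only at this; omega⟩
  obtain ⟨k, hk, hmax⟩ := Int.exists_greatest_of_bdd hbdd hne
  exact ⟨k, hk, lt_of_not_ge fun h => by have := hmax (k + 1) h; omega⟩

lemma apply_sub_one_eq {k i : ℤ} (h₁ : r.t k < i) (h₂ : i < r.t (k + 1)) : x (i - 1) = x i := by
  rw [r.const k i h₁.le h₂, r.const k (i - 1) (by omega) (by omega)]

lemma apply_t_sub_one_ne (k : ℤ) : x (r.t k - 1) ≠ x (r.t k) := by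
  have hlt : r.t (k - 1) < r.t k := r.mono (by omega)
  have := r.alt (k - 1)
  rw [sub_add_cancel] at this
  rw [r.const (k - 1) (r.t k - 1) (by omega) (by rw [sub_add_cancel]; omega)]
  exact this.symm

lemma t_succ_le_of_lt {k j : ℤ} (h : r.t k < r'.t j) : r.t (k + 1) ≤ r'.t j :=
  le_of_not_gt fun h' => r'.apply_t_sub_one_ne j (r.apply_sub_one_eq h h')

lemma t_zero_le : r.t 0 ≤ r'.t 0 :=
  le_of_not_gt fun h => by
    have := r'.t_succ_le_of_lt r h
    rw [zero_add] at this
    have := r.start_nonpos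
    have := r'.start_pos
    omega

lemma t_succ_le {a b : ℤ} (h : r.t a = r'.t b) : r'.t (b + 1) ≤ r.t (a + 1) :=
  r'.t_succ_le_of_lt r (h ▸ r.mono (lt_add_one a))

lemma t_sub_one_le {a b : ℤ} (h : r.t a = r'.t b) : r.t (a - 1) ≤ r'.t (b - 1) :=
  le_of_not_gt fun h' => by
    have hb := r'.t_succ_le_of_lt r h'
    rw [sub_add_cancel] at hb
    have := r.mono (sub_one_lt a)
    omega

theorem t_eq : r.t = r'.t := by
  funext k
  induction k using Int.induction_on with
  | zero => exact le_antisymm (r.t_zero_le r') (r'.t_zero_le r)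
  | succ k ih => exact le_antisymm (r'.t_succ_le r ih.symm) (r.t_succ_le r' ih)
  | pred k ih => exact le_antisymm (r.t_sub_one_le r' ih) (r'.t_sub_one_le r ih.symm)

lemma exists_t_eq_of_length_le_three (hlen : ∀ k, r.t (k + 1) - r.t k ≤ 3) {i : ℤ}
    (h₁ : x (i + 1) = x i) (h₂ : x (i + 2) = x i) : ∃ k, r.t k = i := by
  obtain ⟨k, hk, hk'⟩ := r.exists_t_le_lt i
  have hi : x i = x (r.t k) := r.const k i hk hk'
  have halt := r.alt k
  have h₁' : r.t (k + 1) ≠ i + 1 := fun h => halt (by rw [h, h₁, hi])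
  have h₂' : r.t (k + 1) ≠ i + 2 := fun h => halt (by rw [h, h₂, hi])
  exact ⟨k, by have := hlen k; omega⟩

end RunStructure

section Delta

variable {x : ℤ → ℕ}

lemma IsDelta.unique {d d' : ℤ → ℕ} (h : IsDelta x d) (h' : IsDelta x d') : d = d' := by
  obtain ⟨r, hr⟩ := h
  obtain ⟨r', hr'⟩ := h'
  funext k
  have hk := hr k
  rw [r.t_eq r'] at hk
  have := hr' k
  omega

lemma delta_eq_of_isDelta {d : ℤ → ℕ} (h : IsDelta x d) : delta x = d := by
  have hex : ∃ d, IsDelta x d := ⟨d, h⟩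
  rw [delta, dif_pos hex]
  exact hex.choose_spec.unique h

lemma isDelta_delta_of_ne_zero {n : ℤ} (h : delta x n ≠ 0) : IsDelta x (delta x) := by
  by_cases hex : ∃ d, IsDelta x d
  · rw [delta_eq_of_isDelta hex.choose_spec]
    exact hex.choose_spec
  · exact absurd (by rw [delta, dif_neg hex]) h

end Delta

lemma sval_eq_lval_iff_of_ne {a b : ABCD} (hs : sval a ≠ sval b) (hl : lval a ≠ lval b) :
    sval a = lval a ↔ sval b = lval b := by
  cases a <;> cases b <;> simp_all [sval, lval]

lemma Alternating.sval_add_two {y : ℤ → ABCD} (hy : Alternating y) (n : ℤ) :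
    sval (y (n + 2)) = sval (y n) := by
  have h₁ := hy n
  have h₂ := hy (n + 1)
  rw [add_assoc, one_add_one_eq_two] at h₂
  revert h₁ h₂
  cases y n <;> cases y (n + 1) <;> cases y (n + 2) <;> simp [sval]

section Recoding

variable {x : ℤ → ℕ} {y : ℤ → ABCD}

lemma IsRecoding.isDelta (h : IsRecoding x y) : IsDelta x fun n => lval (y n) :=
  let ⟨r, hr⟩ := h
  ⟨r, fun k => (hr k).2.symm⟩

lemma IsRecoding.alternating (h : IsRecoding x y) : Alternating y := by
  obtain ⟨r, hr⟩ := h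
  intro n
  have := r.alt n
  rw [(hr n).1, (hr (n + 1)).1] at this
  exact this.symm

lemma SmoothSeq.exists_runStructure_lval (hx : SmoothSeq x) (h : IsRecoding x y) :
    ∃ r : RunStructure fun n => lval (y n),
      ∀ k, r.t (k + 1) - r.t k = 1 ∨ r.t (k + 1) - r.t k = 3 := by
  have h₂ : ∀ n, delta (fun n => lval (y n)) n = 1 ∨ delta (fun n => lval (y n)) n = 3 := by
    simpa [delta_eq_of_isDelta h.isDelta] using hx 2
  obtain ⟨r, hr⟩ := isDelta_delta_of_ne_zero (x := fun n => lval (y n)) (n := 0)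
    (by rcases h₂ 0 with e | e <;> omega)
  exact ⟨r, fun k => by have := hr k; rcases h₂ k with e | e <;> omega⟩

lemma sval_eq_lval_at_t_iff (hy : Alternating y) (r : RunStructure fun n => lval (y n))
    (hlen : ∀ k, r.t (k + 1) - r.t k = 1 ∨ r.t (k + 1) - r.t k = 3) (k : ℤ) :
    sval (y (r.t k)) = lval (y (r.t k)) ↔ sval (y (r.t 0)) = lval (y (r.t 0)) := by
  have hstep : ∀ k, sval (y (r.t k)) = lval (y (r.t k)) ↔
      sval (y (r.t (k + 1))) = lval (y (r.t (k + 1))) := by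
    intro k
    refine sval_eq_lval_iff_of_ne ?_ (r.alt k).symm
    rcases hlen k with e | e <;> rw [show r.t (k + 1) = r.t k + (r.t (k + 1) - r.t k) by ring, e]
    · exact hy _
    · rw [show r.t k + 3 = r.t k + 2 + 1 by ring, ← hy.sval_add_two (r.t k)]
      exact hy _
  induction k using Int.induction_on with
  | zero => rfl
  | succ k ih => exact (hstep k).symm.trans ih
  | pred k ih => exact (sub_add_cancel (-(k : ℤ)) 1 ▸ hstep (-k - 1)).trans ih

theorem IsRecoding.not_hasType0_and_hasType1 (hx : SmoothSeq x) (h : IsRecoding x y) :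
    ¬ (HasType0 y ∧ HasType1 y) := by
  rintro ⟨⟨i, hi⟩, ⟨j, hj⟩⟩
  obtain ⟨r, hlen⟩ := hx.exists_runStructure_lval h
  have hlen3 : ∀ k, r.t (k + 1) - r.t k ≤ 3 := fun k => by rcases hlen k with e | e <;> omega
  obtain ⟨k, rfl⟩ : ∃ k, r.t k = i := by
    refine r.exists_t_eq_of_length_le_three hlen3 ?_ ?_ <;>
      rcases hi with ⟨h₀, h₁, h₂⟩ | ⟨h₀, h₁, h₂⟩ <;> simp [h₀, h₁, h₂, lval]
  obtain ⟨k', rfl⟩ : ∃ k, r.t k = j := by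
    refine r.exists_t_eq_of_length_le_three hlen3 ?_ ?_ <;>
      rcases hj with ⟨h₀, h₁, h₂⟩ | ⟨h₀, h₁, h₂⟩ <;> simp [h₀, h₁, h₂, lval]
  have hk : sval (y (r.t k)) = lval (y (r.t k)) := by
    rcases hi with ⟨h₀, -, -⟩ | ⟨h₀, -, -⟩ <;> simp [h₀, sval, lval]
  have hk' : sval (y (r.t k')) ≠ lval (y (r.t k')) := by
    rcases hj with ⟨h₀, -, -⟩ | ⟨h₀, -, -⟩ <;> simp [h₀, sval, lval]
  have ha := h.alternating
  exact hk' ((sval_eq_lval_at_t_iff ha r hlen k').2 ((sval_eq_lval_at_t_iff ha r hlen k).1 hk))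

end Recoding

/-- Exclusion of the two types.
A sequence `y ∈ Y` cannot simultaneously contain an elementary block in `{ABA, DCD}`
and an elementary block in `{BAB, CDC}`. -/
theorem stmt4 (y : ℤ → ABCD) (hy : y ∈ SmoothY) : ¬ (HasType0 y ∧ HasType1 y) := by
  obtain ⟨x, hx, rfl⟩ := hy
  by_cases hrec : ∃ y, IsRecoding x y
  · have h : IsRecoding x (recode x) := by
      rw [recode, dif_pos hrec]
      exact hrec.choose_spec
    exact h.not_hasType0_and_hasType1 hx
  · rintro ⟨-, j, hj⟩
    rw [recode, dif_neg hrec] at hj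
    simp at hj
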